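/- Let X₁, X₂, … be i.i.d. real random variables with all moments finite such that there is L ≥ 1 with (E max_{i≤n} |X_i|^p)^{1/p} ≤ L·[E max_{i≤n} |X_i| + ‖X₁‖_p] for every p ≥ 1 and every n. Then ‖X₁‖_{2p} ≤ α(L)·‖X₁‖_p for all p ≥ 2, where one may take α(L) = (4 + 1/(2L))·(16L² + 1). -/

import Mathlib

/-!
Write `a = ‖X₁‖_{2p}`, `b = ‖X₁‖_p`, `κ = 4 + 1/(2L)`, `n = ⌊(4L)^{2p}⌋ + 1` and
`S = max_{i<n} |X_i|`. Bounding the maximum by the sum gives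
`E S ≤ (n E|X₁|^p)^{1/p} ≤ (16L² + 1) b`.

If `P(|X₁| ≥ a/κ) ≥ 1/n`, Markov's inequality gives `a/κ ≤ n^{1/p} b` directly. Otherwise the
events `|X_i| ≥ a/κ` are rare, and the Bonferroni-type bound
`∑_i h(X_i) (1 - ∑_{j≠i} 1_A(X_j)) ≤ max_i h(X_i)` (for `h ≥ 0` supported on `A`), taken for
`i < ⌈n/2⌉` and integrated using independence, gives `E S^{2p} ≥ (n/8) a^{2p} ≥ (2La)^{2p}`.
The comparison hypothesis at exponent `2p` then reads `2La ≤ L (E S + a)`, i.e. `a ≤ E S`.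
-/

open MeasureTheory ProbabilityTheory

section RealInequalities

open Finset

-- At most one term is positive: a positive term forces every other `a j`, hence every other
-- `h j`, to vanish.
theorem Finset.sum_mul_one_sub_sum_erase_le {ι : Type*} [DecidableEq ι] (s : Finset ι)
    {h a : ι → ℝ} {c : ℝ} (ha : ∀ i ∈ s, a i = 0 ∨ a i = 1) (hh : ∀ i ∈ s, 0 ≤ h i)
    (hsupp : ∀ i ∈ s, a i = 0 → h i = 0) (hhc : ∀ i ∈ s, h i ≤ c) (hc : 0 ≤ c) :
    ∑ i ∈ s, h i * (1 - ∑ j ∈ s.erase i, a j) ≤ c := by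
  by_cases hpos : ∃ i ∈ s, 0 < h i * (1 - ∑ j ∈ s.erase i, a j)
  · obtain ⟨i, hi, hpos⟩ := hpos
    have hrest : ∀ j ∈ s.erase i, a j = 0 := by
      intro j hj
      refine (ha j (mem_of_mem_erase hj)).resolve_right fun haj => ?_
      have hsum : a j ≤ ∑ k ∈ s.erase i, a k := single_le_sum (fun k hk => by
        rcases ha k (mem_of_mem_erase hk) with h0 | h1 <;> simp [*]) hj
      nlinarith [hh i hi]
    rw [sum_eq_single_of_mem i hi fun j hj hji => ?_, sum_eq_zero hrest, sub_zero, mul_one]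
    · exact hhc i hi
    · rw [hsupp j hj (hrest j (mem_erase.2 ⟨hji, hj⟩)), zero_mul]
  · push Not at hpos
    exact (sum_nonpos hpos).trans hc

theorem Real.iSup_rpow_le_sum {ι : Type*} [Fintype ι] [Nonempty ι] {f : ι → ℝ}
    (hf : ∀ i, 0 ≤ f i) (r : ℝ) : (⨆ i, f i) ^ r ≤ ∑ i, f i ^ r := by
  obtain ⟨i, hi⟩ := exists_eq_ciSup_of_finite (f := f)
  rw [← hi]
  exact single_le_sum (fun j _ => Real.rpow_nonneg (hf j) r) (mem_univ i)

theorem exists_nat_rpow_mul_le_and_rpow_one_div_le {c k p : ℝ} (hc : 0 ≤ c) (hp : 1 ≤ p) :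
    ∃ n : ℕ, 0 < n ∧ c ^ (k * p) ≤ n ∧ (n : ℝ) ^ (1 / p) ≤ c ^ k + 1 := by
  have hp0 : 0 < p := by linarith
  refine ⟨⌊c ^ (k * p)⌋₊ + 1, Nat.succ_pos _, by exact_mod_cast (Nat.lt_floor_add_one _).le, ?_⟩
  calc ((⌊c ^ (k * p)⌋₊ + 1 : ℕ) : ℝ) ^ (1 / p) ≤ (c ^ (k * p) + 1) ^ (1 / p) := by
        gcongr
        push_cast
        linarith [Nat.floor_le (Real.rpow_nonneg hc (k * p))]
    _ ≤ (c ^ (k * p)) ^ (1 / p) + 1 ^ (1 / p) :=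
        Real.rpow_add_le_add_rpow (Real.rpow_nonneg hc _) zero_le_one (by positivity)
          ((div_le_one hp0).2 hp)
    _ = c ^ k + 1 := by
        rw [← Real.rpow_mul hc, mul_assoc, mul_one_div_cancel hp0.ne', mul_one, Real.one_rpow]

theorem rpow_le_quarter_mul_sub_div_rpow {r L a κ N : ℝ} (hr : 3 ≤ r) (hL : 0 ≤ L) (ha : 0 ≤ a)
    (hκ : 2 ≤ κ) (hN : (4 * L) ^ r ≤ N) :
    (2 * L * a) ^ r ≤ N / 4 * (a ^ r - (a / κ) ^ r) := by
  have hκr : 2 ≤ κ ^ r := hκ.trans (Real.self_le_rpow_of_one_le (by linarith) (by linarith))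
  have h2r : 8 ≤ (2 : ℝ) ^ r := by
    calc (8 : ℝ) = 2 ^ (3 : ℝ) := by norm_num
      _ ≤ 2 ^ r := Real.rpow_le_rpow_of_exponent_le (by norm_num) hr
  have har : 0 ≤ a ^ r := Real.rpow_nonneg ha r
  have hLr : 0 ≤ (2 * L) ^ r := Real.rpow_nonneg (by positivity) r
  have htail : (a / κ) ^ r ≤ a ^ r / 2 := by
    rw [Real.div_rpow ha (by linarith)]
    exact div_le_div_of_nonneg_left har (by norm_num) hκr
  have hsplit : (4 * L) ^ r = 2 ^ r * (2 * L) ^ r := by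
    rw [← Real.mul_rpow (by norm_num) (by positivity)]
    ring_nf
  rw [Real.mul_rpow (by positivity) ha]
  nlinarith [mul_le_mul_of_nonneg_right h2r hLr]

end RealInequalities

namespace ProbabilityTheory.IdentDistrib

variable {α β γ : Type*} [MeasurableSpace α] [MeasurableSpace β] [MeasurableSpace γ]
  {μ : Measure α} {ν : Measure β} {f : α → γ} {g : β → γ} {u : γ → ℝ}

theorem integral_comp (h : IdentDistrib f g μ ν) (hu : Measurable u) :
    ∫ x, u (f x) ∂μ = ∫ y, u (g y) ∂ν :=
  (h.comp hu).integral_eq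

theorem integrable_comp_iff (h : IdentDistrib f g μ ν) (hu : Measurable u) :
    Integrable (fun x => u (f x)) μ ↔ Integrable (fun y => u (g y)) ν :=
  (h.comp hu).integrable_iff

end ProbabilityTheory.IdentDistrib

section Moments

variable {Ω : Type*} [MeasurableSpace Ω] {μ : Measure Ω}

theorem integral_le_integral_rpow_rpow_one_div [IsProbabilityMeasure μ] {f : Ω → ℝ} {p : ℝ}
    (hp : 1 ≤ p) (hf : 0 ≤ᵐ[μ] f) (hfp : Integrable (fun ω => f ω ^ p) μ) :
    ∫ ω, f ω ∂μ ≤ (∫ ω, f ω ^ p ∂μ) ^ (1 / p) := by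
  have hfp0 : 0 ≤ ∫ ω, f ω ^ p ∂μ :=
    integral_nonneg_of_ae (hf.mono fun ω hω => Real.rpow_nonneg hω p)
  by_cases hfi : Integrable f μ
  · rw [one_div, Real.le_rpow_inv_iff_of_pos (integral_nonneg_of_ae hf) hfp0 (by linarith)]
    exact (convexOn_rpow hp).map_integral_le (Real.continuous_rpow_const (by linarith)).continuousOn
      isClosed_Ici hf hfi hfp
  · rw [integral_undef hfi]
    exact Real.rpow_nonneg hfp0 _

theorem le_mul_integral_abs_rpow_rpow_one_div {Y : Ω → ℝ} {p t c : ℝ} (hp : 0 < p) (ht : 0 ≤ t)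
    (hc : 0 < c) (hYp : Integrable (fun ω => |Y ω| ^ p) μ)
    (htail : 1 / c ≤ μ.real {ω | t ≤ |Y ω|}) :
    t ≤ (c * ∫ ω, |Y ω| ^ p ∂μ) ^ (1 / p) := by
  have hmarkov := mul_meas_ge_le_integral_of_nonneg
    (ae_of_all _ fun ω => Real.rpow_nonneg (abs_nonneg (Y ω)) p) hYp (t ^ p)
  have hset : {ω | t ^ p ≤ |Y ω| ^ p} = {ω | t ≤ |Y ω|} := by
    ext ω
    exact Real.rpow_le_rpow_iff ht (abs_nonneg _) hp
  rw [hset] at hmarkov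
  rw [one_div, Real.le_rpow_inv_iff_of_pos ht (by positivity) hp]
  calc t ^ p = c * (t ^ p * (1 / c)) := by field_simp
    _ ≤ c * (t ^ p * μ.real {ω | t ≤ |Y ω|}) := by gcongr
    _ ≤ c * ∫ ω, |Y ω| ^ p ∂μ := by gcongr

theorem MeasureTheory.Integrable.indicator_comp {β E : Type*} [MeasurableSpace β]
    [NormedAddCommGroup E] {Y : Ω → β} (hY : Measurable Y) {A : Set β} (hA : MeasurableSet A)
    {f : β → E} (hf : Integrable (fun ω => f (Y ω)) μ) :
    Integrable (fun ω => A.indicator f (Y ω)) μ := by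
  simp_rw [← Set.indicator_comp_right]
  exact hf.indicator (hY hA)

theorem integral_abs_rpow_le_integral_indicator_add [IsProbabilityMeasure μ] {Y : Ω → ℝ}
    (hY : Measurable Y) {r t : ℝ} (hr : 0 ≤ r) (ht : 0 ≤ t)
    (hYr : Integrable (fun ω => |Y ω| ^ r) μ) :
    ∫ ω, |Y ω| ^ r ∂μ ≤ ∫ ω, {x | t ≤ |x|}.indicator (fun x => |x| ^ r) (Y ω) ∂μ + t ^ r := by
  have hA : MeasurableSet {x : ℝ | t ≤ |x|} := measurableSet_le measurable_const measurable_abs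
  have hind : Integrable (fun ω => {x | t ≤ |x|}.indicator (fun x => |x| ^ r) (Y ω)) μ :=
    hYr.indicator_comp hY hA
  calc ∫ ω, |Y ω| ^ r ∂μ
      ≤ ∫ ω, ({x | t ≤ |x|}.indicator (fun x => |x| ^ r) (Y ω) + t ^ r) ∂μ := by
        refine integral_mono hYr (hind.add (integrable_const _)) fun ω => ?_
        by_cases hω : t ≤ |Y ω|
        · rw [Set.indicator_of_mem (show Y ω ∈ {x | t ≤ |x|} from hω)]
          linarith [Real.rpow_nonneg ht r]
        · rw [Set.indicator_of_notMem (show Y ω ∉ {x | t ≤ |x|} from hω), zero_add]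
          exact Real.rpow_le_rpow (abs_nonneg _) (not_le.1 hω).le hr
    _ = ∫ ω, {x | t ≤ |x|}.indicator (fun x => |x| ^ r) (Y ω) ∂μ + t ^ r := by
        rw [integral_add hind (integrable_const _), integral_const, probReal_univ, one_smul]

end Moments

section IIDSequence

open Finset

variable {Ω : Type*} [MeasurableSpace Ω] {μ : Measure Ω} {X : ℕ → Ω → ℝ}

theorem integrable_iSup_abs_rpow (hX : ∀ i, Measurable (X i))
    (hid : ∀ i, IdentDistrib (X i) (X 0) μ μ) {r : ℝ}
    (hint : Integrable (fun ω => |X 0 ω| ^ r) μ) (n : ℕ) [NeZero n] :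
    Integrable (fun ω => (⨆ i : Fin n, |X i ω|) ^ r) μ := by
  refine (integrable_finsetSum univ fun (i : Fin n) _ =>
      ((hid i).integrable_comp_iff (measurable_abs.pow_const r)).2 hint).mono
    ((Measurable.iSup fun (i : Fin n) => (hX i).abs).pow_const r).aestronglyMeasurable
    (ae_of_all _ fun ω => ?_)
  rw [Real.norm_of_nonneg (Real.rpow_nonneg (Real.iSup_nonneg fun i => abs_nonneg _) r),
    Real.norm_of_nonneg (sum_nonneg fun i _ => Real.rpow_nonneg (abs_nonneg _) r)]
  exact Real.iSup_rpow_le_sum (fun i => abs_nonneg _) r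

theorem integral_iSup_abs_rpow_le (hX : ∀ i, Measurable (X i))
    (hid : ∀ i, IdentDistrib (X i) (X 0) μ μ) {r : ℝ}
    (hint : Integrable (fun ω => |X 0 ω| ^ r) μ) (n : ℕ) [NeZero n] :
    ∫ ω, (⨆ i : Fin n, |X i ω|) ^ r ∂μ ≤ n * ∫ ω, |X 0 ω| ^ r ∂μ := by
  have hint_i (i : Fin n) : Integrable (fun ω => |X i ω| ^ r) μ :=
    ((hid i).integrable_comp_iff (measurable_abs.pow_const r)).2 hint
  calc ∫ ω, (⨆ i : Fin n, |X i ω|) ^ r ∂μ ≤ ∫ ω, ∑ i : Fin n, |X i ω| ^ r ∂μ :=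
        integral_mono (integrable_iSup_abs_rpow hX hid hint n)
          (integrable_finsetSum univ fun i _ => hint_i i)
          fun ω => Real.iSup_rpow_le_sum (fun i => abs_nonneg _) r
    _ = n * ∫ ω, |X 0 ω| ^ r ∂μ := by
        rw [integral_finsetSum univ fun i _ => hint_i i]
        simp [(hid _).integral_comp (measurable_abs.pow_const r)]

theorem integral_iSup_abs_le [IsProbabilityMeasure μ] (hX : ∀ i, Measurable (X i))
    (hid : ∀ i, IdentDistrib (X i) (X 0) μ μ) {p : ℝ} (hp : 1 ≤ p)
    (hint : Integrable (fun ω => |X 0 ω| ^ p) μ) (n : ℕ) [NeZero n] :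
    ∫ ω, ⨆ i : Fin n, |X i ω| ∂μ ≤ (n * ∫ ω, |X 0 ω| ^ p ∂μ) ^ (1 / p) :=
  (integral_le_integral_rpow_rpow_one_div hp
    (ae_of_all _ fun ω => Real.iSup_nonneg fun i => abs_nonneg _)
    (integrable_iSup_abs_rpow hX hid hint n)).trans
  (Real.rpow_le_rpow (integral_nonneg fun ω => Real.rpow_nonneg
    (Real.iSup_nonneg fun i => abs_nonneg _) p) (integral_iSup_abs_rpow_le hX hid hint n)
    (by positivity))

theorem integral_comp_mul_indicator_comp_of_ne (hX : ∀ i, Measurable (X i))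
    (hindep : iIndepFun X μ) (hid : ∀ i, IdentDistrib (X i) (X 0) μ μ) {A : Set ℝ}
    (hA : MeasurableSet A) {h : ℝ → ℝ} (hh : Measurable h) {i j : ℕ} (hij : i ≠ j) :
    ∫ ω, h (X i ω) * A.indicator 1 (X j ω) ∂μ
      = (∫ ω, h (X 0 ω) ∂μ) * μ.real (X 0 ⁻¹' A) := by
  have hind : Measurable (A.indicator (1 : ℝ → ℝ)) := measurable_one.indicator hA
  have hprod := ((hindep.indepFun hij).comp hh hind).integral_fun_mul_eq_mul_integral
    (hh.comp (hX i)).aestronglyMeasurable (hind.comp (hX j)).aestronglyMeasurable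
  simp only [Function.comp_apply] at hprod
  rw [hprod, (hid i).integral_comp hh, (hid j).integral_comp hind]
  simp_rw [← Set.indicator_comp_right]
  exact congrArg _ (integral_indicator_one (hX 0 hA))

theorem mul_integral_comp_le_integral_of_iIndepFun (hX : ∀ i, Measurable (X i))
    (hindep : iIndepFun X μ) (hid : ∀ i, IdentDistrib (X i) (X 0) μ μ) {A : Set ℝ}
    (hA : MeasurableSet A) {h : ℝ → ℝ} (hh : Measurable h) (hh0 : 0 ≤ h)
    (hsupp : Function.support h ⊆ A) (hhi : Integrable (fun ω => h (X 0 ω)) μ) (m : ℕ)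
    {F : Ω → ℝ} (hF : Integrable F μ) (hF0 : 0 ≤ F) (hhF : ∀ ω, ∀ i < m, h (X i ω) ≤ F ω) :
    m * (1 - (m - 1) * μ.real (X 0 ⁻¹' A)) * ∫ ω, h (X 0 ω) ∂μ ≤ ∫ ω, F ω ∂μ := by
  set M := ∫ ω, h (X 0 ω) ∂μ
  set q := μ.real (X 0 ⁻¹' A)
  have hhi_i (i : ℕ) : Integrable (fun ω => h (X i ω)) μ :=
    ((hid i).integrable_comp_iff hh).2 hhi
  have hind : Measurable (A.indicator (1 : ℝ → ℝ)) := measurable_one.indicator hA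
  have hcross_int (i j : ℕ) :
      Integrable (fun ω => h (X i ω) * A.indicator (1 : ℝ → ℝ) (X j ω)) μ := by
    refine (hhi_i i).mono ((hh.comp (hX i)).mul (hind.comp (hX j))).aestronglyMeasurable
      (ae_of_all _ fun ω => ?_)
    rw [norm_mul]
    refine mul_le_of_le_one_right (norm_nonneg _) ?_
    rcases Set.indicator_eq_zero_or_self A (1 : ℝ → ℝ) (X j ω) with h0 | h1 <;> simp [*]
  have hterm_int (i : ℕ) : Integrable
      (fun ω => h (X i ω) * (1 - ∑ j ∈ (range m).erase i, A.indicator 1 (X j ω))) μ := by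
    simp_rw [mul_sub, mul_one, mul_sum]
    exact (hhi_i i).sub (integrable_finsetSum _ fun j _ => hcross_int i j)
  have hterm (i : ℕ) (hi : i ∈ range m) :
      ∫ ω, h (X i ω) * (1 - ∑ j ∈ (range m).erase i, A.indicator 1 (X j ω)) ∂μ
        = (1 - (m - 1) * q) * M := by
    simp_rw [mul_sub, mul_one, mul_sum]
    rw [integral_sub (hhi_i i) (integrable_finsetSum _ fun j _ => hcross_int i j),
      integral_finsetSum _ fun j _ => hcross_int i j,
      sum_congr rfl fun j hj =>
        integral_comp_mul_indicator_comp_of_ne hX hindep hid hA hh (ne_of_mem_erase hj).symm,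
      sum_const, card_erase_of_mem hi, card_range, nsmul_eq_mul,
      Nat.cast_pred (Nat.zero_lt_of_lt (mem_range.1 hi)), (hid i).integral_comp hh]
    ring
  have hpoint (ω : Ω) :
      ∑ i ∈ range m, h (X i ω) * (1 - ∑ j ∈ (range m).erase i, A.indicator 1 (X j ω)) ≤ F ω := by
    refine (range m).sum_mul_one_sub_sum_erase_le (fun i _ => ?_) (fun i _ => hh0 _)
      (fun i _ hi => ?_) (fun i hi => hhF ω i (mem_range.1 hi)) (hF0 ω)
    · rcases Set.indicator_eq_zero_or_self A (1 : ℝ → ℝ) (X i ω) with h0 | h1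
      exacts [Or.inl h0, Or.inr h1]
    · refine Function.notMem_support.1 fun hs => ?_
      simp [Set.indicator_of_mem (hsupp hs)] at hi
  calc m * (1 - (m - 1) * q) * M
      = ∑ i ∈ range m,
          ∫ ω, h (X i ω) * (1 - ∑ j ∈ (range m).erase i, A.indicator 1 (X j ω)) ∂μ := by
        rw [sum_congr rfl hterm, sum_const, card_range, nsmul_eq_mul, mul_assoc]
    _ = ∫ ω, ∑ i ∈ range m,
          h (X i ω) * (1 - ∑ j ∈ (range m).erase i, A.indicator 1 (X j ω)) ∂μ :=
        (integral_finsetSum _ fun i _ => hterm_int i).symm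
    _ ≤ ∫ ω, F ω ∂μ := integral_mono (integrable_finsetSum _ fun i _ => hterm_int i) hF hpoint

theorem mul_integral_abs_rpow_sub_le_integral_iSup [IsProbabilityMeasure μ]
    (hX : ∀ i, Measurable (X i)) (hindep : iIndepFun X μ)
    (hid : ∀ i, IdentDistrib (X i) (X 0) μ μ) {r t : ℝ} (hr : 0 ≤ r) (ht : 0 ≤ t)
    (hint : Integrable (fun ω => |X 0 ω| ^ r) μ) (n : ℕ) [NeZero n]
    (htail : n * μ.real {ω | t ≤ |X 0 ω|} ≤ 1) :
    n / 4 * (∫ ω, |X 0 ω| ^ r ∂μ - t ^ r) ≤ ∫ ω, (⨆ i : Fin n, |X i ω|) ^ r ∂μ := by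
  set A := {x : ℝ | t ≤ |x|}
  set q := μ.real {ω | t ≤ |X 0 ω|}
  -- Only the first `⌈n/2⌉` variables are used, so that `(m - 1) q ≤ 1/2`.
  set m := (n + 1) / 2
  have hA : MeasurableSet A := measurableSet_le measurable_const measurable_abs
  have hh : Measurable (A.indicator fun x : ℝ => |x| ^ r) :=
    (measurable_abs.pow_const r).indicator hA
  have hh0 : 0 ≤ A.indicator fun x : ℝ => |x| ^ r :=
    Set.indicator_nonneg fun x _ => Real.rpow_nonneg (abs_nonneg x) r
  have hS0 (ω : Ω) : 0 ≤ (⨆ i : Fin n, |X i ω|) ^ r :=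
    Real.rpow_nonneg (Real.iSup_nonneg fun i => abs_nonneg _) r
  have hhS (ω : Ω) (i : ℕ) (hi : i < m) :
      A.indicator (fun x : ℝ => |x| ^ r) (X i ω) ≤ (⨆ i : Fin n, |X i ω|) ^ r := by
    refine (Set.indicator_le_self' (fun x _ => Real.rpow_nonneg (abs_nonneg x) r) _).trans ?_
    exact Real.rpow_le_rpow (abs_nonneg _)
      (le_ciSup (f := fun j : Fin n => |X j ω|) (Finite.bddAbove_range _) ⟨i, by omega⟩) hr
  have hbonf := mul_integral_comp_le_integral_of_iIndepFun hX hindep hid hA hh hh0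
    Set.support_indicator_subset (hint.indicator_comp (hX 0) hA) m
    (integrable_iSup_abs_rpow hX hid hint n) hS0 hhS
  have htrunc := integral_abs_rpow_le_integral_indicator_add (hX 0) hr ht hint
  have hcoef : (n : ℝ) / 4 ≤ m * (1 - (m - 1) * q) := by
    have hn1 : 1 ≤ n := NeZero.one_le
    have h2m : (n : ℝ) ≤ 2 * m := by exact_mod_cast (show n ≤ 2 * m by omega)
    have h2m' : 2 * (m : ℝ) ≤ n + 1 := by exact_mod_cast (show 2 * m ≤ n + 1 by omega)
    have hm1 : (1 : ℝ) ≤ m := by exact_mod_cast (show 1 ≤ m by omega)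
    have hq0 : 0 ≤ q := measureReal_nonneg
    have hmq : 2 * (m - 1) * q ≤ 1 := by nlinarith
    nlinarith
  calc (n : ℝ) / 4 * (∫ ω, |X 0 ω| ^ r ∂μ - t ^ r)
      ≤ n / 4 * ∫ ω, A.indicator (fun x : ℝ => |x| ^ r) (X 0 ω) ∂μ := by gcongr; linarith
    _ ≤ m * (1 - (m - 1) * q) * ∫ ω, A.indicator (fun x : ℝ => |x| ^ r) (X 0 ω) ∂μ := by
        gcongr
        exact integral_nonneg fun ω => hh0 _
    _ ≤ ∫ ω, (⨆ i : Fin n, |X i ω|) ^ r ∂μ := hbonf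

theorem le_integral_iSup_abs_of_tail_le [IsProbabilityMeasure μ] (hX : ∀ i, Measurable (X i))
    (hindep : iIndepFun X μ) (hid : ∀ i, IdentDistrib (X i) (X 0) μ μ) {r L κ : ℝ} (hr : 3 ≤ r)
    (hL : 0 < L) (hκ : 2 ≤ κ) (hint : Integrable (fun ω => |X 0 ω| ^ r) μ) (n : ℕ) [NeZero n]
    (hn : (4 * L) ^ r ≤ n)
    (htail : n * μ.real {ω | (∫ ω, |X 0 ω| ^ r ∂μ) ^ (1 / r) / κ ≤ |X 0 ω|} ≤ 1)
    (hcomp : (∫ ω, (⨆ i : Fin n, |X i ω|) ^ r ∂μ) ^ (1 / r)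
      ≤ L * ((∫ ω, ⨆ i : Fin n, |X i ω| ∂μ) + (∫ ω, |X 0 ω| ^ r ∂μ) ^ (1 / r))) :
    (∫ ω, |X 0 ω| ^ r ∂μ) ^ (1 / r) ≤ ∫ ω, ⨆ i : Fin n, |X i ω| ∂μ := by
  set a := (∫ ω, |X 0 ω| ^ r ∂μ) ^ (1 / r)
  have hI0 : 0 ≤ ∫ ω, |X 0 ω| ^ r ∂μ := integral_nonneg fun ω => Real.rpow_nonneg (abs_nonneg _) r
  have ha0 : 0 ≤ a := Real.rpow_nonneg hI0 _
  have har : a ^ r = ∫ ω, |X 0 ω| ^ r ∂μ := by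
    show ((∫ ω, |X 0 ω| ^ r ∂μ) ^ (1 / r)) ^ r = _
    rw [one_div, Real.rpow_inv_rpow hI0 (by linarith)]
  have hlower := mul_integral_abs_rpow_sub_le_integral_iSup hX hindep hid (by linarith)
    (div_nonneg ha0 (by linarith)) hint n htail
  rw [← har] at hlower
  have h2La : 2 * L * a ≤ (∫ ω, (⨆ i : Fin n, |X i ω|) ^ r ∂μ) ^ (1 / r) := by
    rw [one_div, Real.le_rpow_inv_iff_of_pos (by positivity) (integral_nonneg fun ω =>
      Real.rpow_nonneg (Real.iSup_nonneg fun i => abs_nonneg _) r) (by linarith)]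
    exact (rpow_le_quarter_mul_sub_div_rpow hr hL.le ha0 hκ hn).trans hlower
  nlinarith [h2La.trans hcomp]

end IIDSequence

/-- Theorem 1.2 (converse): if for i.i.d. `X₁, X₂, …` the comparison
`(E max_{i≤n} |X_i|^p)^{1/p} ≤ L [E max_{i≤n}|X_i| + ‖X₁‖_p]` holds for all `p ≥ 1` and
all `n`, then `‖X₁‖_{2p} ≤ (4 + 1/(2L))(16L² + 1) ‖X₁‖_p` for all `p ≥ 2`. -/
theorem stmt7 {Ω : Type*} [MeasureSpace Ω] [IsProbabilityMeasure (ℙ : Measure Ω)]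
    (X : ℕ → Ω → ℝ) (hX : ∀ i, Measurable (X i))
    (hindep : iIndepFun X)
    (hid : ∀ i, IdentDistrib (X i) (X 0))
    (hmom : ∀ p : ℝ, 1 ≤ p → Integrable (fun ω => |X 0 ω| ^ p))
    (L : ℝ) (hL : 1 ≤ L)
    (hcomp : ∀ p : ℝ, 1 ≤ p → ∀ n : ℕ, 0 < n →
      (∫ ω, (⨆ i : Fin n, |X i ω|) ^ p) ^ (1 / p)
        ≤ L * ((∫ ω, ⨆ i : Fin n, |X i ω|) + (∫ ω, |X 0 ω| ^ p) ^ (1 / p))) :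
    ∀ p : ℝ, 2 ≤ p →
      (∫ ω, |X 0 ω| ^ (2 * p)) ^ (1 / (2 * p))
        ≤ (4 + 1 / (2 * L)) * (16 * L ^ 2 + 1) * (∫ ω, |X 0 ω| ^ p) ^ (1 / p) := by
  intro p hp
  have hL0 : 0 < L := by linarith
  have hp0 : 0 < p := by linarith
  obtain ⟨n, hn0, hn, hnp⟩ := exists_nat_rpow_mul_le_and_rpow_one_div_le (k := 2)
    (by positivity : 0 ≤ 4 * L) (by linarith : 1 ≤ p)
  have : NeZero n := ⟨hn0.ne'⟩
  rw [Real.rpow_two, mul_pow, show (4 : ℝ) ^ 2 = 16 by norm_num] at hnp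
  set κ := 4 + 1 / (2 * L)
  set a := (∫ ω, |X 0 ω| ^ (2 * p)) ^ (1 / (2 * p))
  set b := (∫ ω, |X 0 ω| ^ p) ^ (1 / p)
  set B := ((n : ℝ) * ∫ ω, |X 0 ω| ^ p) ^ (1 / p)
  have hκ : 4 ≤ κ := le_add_of_nonneg_right (by positivity)
  have haB : a ≤ κ * B := by
    rcases le_or_gt (1 / (n : ℝ)) ((ℙ : Measure Ω).real {ω | a / κ ≤ |X 0 ω|}) with hq | hq
    · calc a = κ * (a / κ) := by field_simp
        _ ≤ κ * B := by
            gcongr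
            exact le_mul_integral_abs_rpow_rpow_one_div hp0 (by positivity) (by positivity)
              (hmom p (by linarith)) hq
    · rw [lt_div_iff₀ (by positivity)] at hq
      calc a ≤ ∫ ω, ⨆ i : Fin n, |X i ω| :=
            le_integral_iSup_abs_of_tail_le hX hindep hid (κ := κ) (by linarith) hL0 (by linarith)
              (hmom _ (by linarith)) n hn (by linarith) (hcomp _ (by linarith) n hn0)
        _ ≤ B := integral_iSup_abs_le hX hid (by linarith) (hmom p (by linarith)) n
        _ ≤ κ * B := le_mul_of_one_le_left (by positivity) (by linarith)
  calc a ≤ κ * B := haB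
    _ = κ * ((n : ℝ) ^ (1 / p) * b) := congrArg (κ * ·) (Real.mul_rpow (Nat.cast_nonneg _)
          (integral_nonneg fun ω => Real.rpow_nonneg (abs_nonneg _) p))
    _ ≤ κ * (16 * L ^ 2 + 1) * b := by rw [mul_assoc]; gcongr
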